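/- Define on Λ*(ℝ^{3n})* the nine operators e₀ = L_{01̄}, e₁ = L_{12̄}, e₂ = L_{1̄0̄}, f₀ = L_{0̄1}, f₁ = L_{1̄2}, f₂ = L_{10}, h₀ = L_{0̄0} − L_{1̄1}, h₁ = L_{1̄1} − L_{2̄2}, h₂ = L_{11̄} − L_{0̄0}. Then these satisfy the Chevalley–Serre relations of sl(4,ℝ): [eᵢ, fⱼ] = δᵢⱼ hᵢ, [eᵢ, hⱼ] = aᵢⱼ eᵢ, [fᵢ, hⱼ] = −aᵢⱼ fᵢ, where (aᵢⱼ) is the Cartan matrix of type A₃ (with rows/columns ordered so that a₀₀=a₁₁=a₂₂=2, a₀₁=a₁₀=−1, a₁₂=a₂₁ being appropriately −1 or 0 and a₀₂=a₂₀=0 as dictated by the computations: [e₀,h₀]=2e₀, [e₁,h₀]=−e₁, [e₂,h₀]=0, [e₀,h₁]=−e₀, [e₁,h₁]=2e₁, [e₂,h₁]=−e₂, [e₀,h₂]=0, [e₁,h₂]=−e₁, [e₂,h₂]=2e₂). -/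

import Mathlib

/-- The model space `ℝ^{3n}` with coordinates indexed by `(k, i)`, `k ∈ {0,1,2}`
labelling the groups `x, y¹, y²` and `i ∈ Fin n`. -/
abbrev Vsp (n : ℕ) := (Fin 3 × Fin n) → ℝ

/-- Operator indices `α ∈ {0,1,2,0̄,1̄,2̄}`: a label in `Fin 3` together with a Boolean
recording whether the index is barred (`true` = barred = contraction). -/
abbrev OpIdx := Bool × Fin 3

/-- The bar involution on operator indices. -/
def bar (α : OpIdx) : OpIdx := (!α.1, α.2)

/-- The operators `E^α_i` on the exterior algebra `Λ*(ℝ^{3n})*` (realized as the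
exterior algebra on the span of the coordinate covectors `dxᵢ, dy¹ᵢ, dy²ᵢ`, i.e. on
`ℝ^{3n}` with its standard basis): for `α` unbarred, wedge (left multiplication) with
the corresponding basis covector; for `α` barred, contraction (interior product) with
the dual basis vector. -/
noncomputable def Eop (n : ℕ) (α : OpIdx) (i : Fin n) :
    Module.End ℝ (ExteriorAlgebra ℝ (Vsp n)) :=
  if α.1 then
    CliffordAlgebra.contractLeft ((Pi.basisFun ℝ (Fin 3 × Fin n)).coord (α.2, i))
  else
    LinearMap.mulLeft ℝ (ExteriorAlgebra.ι ℝ (Pi.single (α.2, i) 1))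

/-- The operators `L_{αβ} = Σᵢ E^α_i E^β_i`. -/
noncomputable def Lop (n : ℕ) (α β : OpIdx) :
    Module.End ℝ (ExteriorAlgebra ℝ (Vsp n)) :=
  ∑ i, Eop n α i * Eop n β i

/-- Unbarred index. -/
def u (k : Fin 3) : OpIdx := (false, k)
/-- Barred index. -/
def b (k : Fin 3) : OpIdx := (true, k)

/-- The Chevalley generators `e₀, e₁, e₂`. -/
noncomputable def eGen (n : ℕ) : Fin 3 → Module.End ℝ (ExteriorAlgebra ℝ (Vsp n))
  | 0 => Lop n (u 0) (b 1)
  | 1 => Lop n (u 1) (b 2)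
  | 2 => Lop n (b 1) (b 0)

/-- The Chevalley generators `f₀, f₁, f₂`. -/
noncomputable def fGen (n : ℕ) : Fin 3 → Module.End ℝ (ExteriorAlgebra ℝ (Vsp n))
  | 0 => Lop n (b 0) (u 1)
  | 1 => Lop n (b 1) (u 2)
  | 2 => Lop n (u 1) (u 0)

/-- The Chevalley generators `h₀, h₁, h₂`. -/
noncomputable def hGen (n : ℕ) : Fin 3 → Module.End ℝ (ExteriorAlgebra ℝ (Vsp n))
  | 0 => Lop n (b 0) (u 0) - Lop n (b 1) (u 1)
  | 1 => Lop n (b 1) (u 1) - Lop n (b 2) (u 2)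
  | 2 => Lop n (u 1) (b 1) - Lop n (b 0) (u 0)

/-- The Cartan matrix of type `A₃` in the ordering dictated by the computations. -/
def cartanA3 : Matrix (Fin 3) (Fin 3) ℝ := !![2, -1, 0; -1, 2, -1; 0, -1, 2]

/-!
The operators `E^α_i` satisfy the canonical anticommutation relations
`{E^α_i, E^β_j} = δ_{β ᾱ} δ_{ij}`. For any such family the quadratic operators
`L_{αβ} = Σᵢ E^α_i E^β_i` close under commutators,
`[L_{αβ}, L_{γδ}] = δ_{γ β̄} L_{αδ} - δ_{δ β̄} L_{αγ} + δ_{γ ᾱ} L_{δβ} - δ_{δ ᾱ} L_{γβ}`,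
and moreover `L_{αα} = 0` and `L_{αᾱ} + L_{ᾱα} = n`. With these three rules every
Chevalley–Serre relation becomes a linear identity among the `L_{αβ}`.
-/

section CanonicalAnticommutation

variable {K R : Type*} [CommRing K] [Ring R] [Algebra K R]

theorem commutator_sub_right (a b c : R) :
    a * (b - c) - (b - c) * a = (a * b - b * a) - (a * c - c * a) := by
  noncomm_ring

theorem commutator_mul_mul_of_anticomm {A B C D : R} {p q r s : K}
    (hBC : B * C + C * B = p • 1) (hBD : B * D + D * B = q • 1)
    (hAC : A * C + C * A = r • 1) (hAD : A * D + D * A = s • 1) :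
    A * B * (C * D) - C * D * (A * B)
      = p • (A * D) - q • (A * C) + r • (D * B) - s • (C * B) := by
  have expand : A * B * (C * D) - C * D * (A * B) = A * (B * C + C * B) * D
      - A * C * (B * D + D * B) + (A * C + C * A) * D * B - C * (A * D + D * A) * B := by
    noncomm_ring
  rw [expand, hBC, hBD, hAC, hAD]
  simp only [mul_smul_comm, smul_mul_assoc, mul_one, one_mul]

variable {ι κ : Type*} [Fintype ι] [DecidableEq ι] [DecidableEq κ] {E : κ → ι → R} {σ : κ → κ}

theorem commutator_sum_mul_sum_mul_of_anticomm
    (hE : ∀ α β i j, E α i * E β j + E β j * E α i = (if β = σ α ∧ j = i then 1 else 0 : K) • 1)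
    (α β γ δ : κ) :
    (∑ i, E α i * E β i) * (∑ i, E γ i * E δ i) - (∑ i, E γ i * E δ i) * (∑ i, E α i * E β i)
      = (if γ = σ β then 1 else 0 : K) • ∑ i, E α i * E δ i
        - (if δ = σ β then 1 else 0 : K) • ∑ i, E α i * E γ i
        + (if γ = σ α then 1 else 0 : K) • ∑ i, E δ i * E β i
        - (if δ = σ α then 1 else 0 : K) • ∑ i, E γ i * E β i := by
  rw [Finset.sum_mul_sum, Finset.sum_mul_sum, Finset.sum_comm (s := Finset.univ)
    (f := fun j i => E γ j * E δ j * (E α i * E β i))]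
  simp_rw [← Finset.sum_sub_distrib,
    commutator_mul_mul_of_anticomm (hE β γ _ _) (hE β δ _ _) (hE α γ _ _) (hE α δ _ _)]
  simp [Finset.sum_sub_distrib, Finset.sum_add_distrib, ite_and, ite_smul, Finset.smul_sum]

theorem sum_mul_add_sum_mul_of_anticomm
    (hE : ∀ α β i j, E α i * E β j + E β j * E α i = (if β = σ α ∧ j = i then 1 else 0 : K) • 1)
    (α : κ) :
    ∑ i, E α i * E (σ α) i + ∑ i, E (σ α) i * E α i = Fintype.card ι := by
  simp [← Finset.sum_add_distrib, hE]

end CanonicalAnticommutation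

theorem Eop_unbarred (n : ℕ) (k : Fin 3) (i : Fin n) :
    Eop n (false, k) i = LinearMap.mulLeft ℝ (ExteriorAlgebra.ι ℝ (Pi.single (k, i) 1)) :=
  rfl

theorem Eop_barred (n : ℕ) (k : Fin 3) (i : Fin n) :
    Eop n (true, k) i
      = CliffordAlgebra.contractLeft ((Pi.basisFun ℝ (Fin 3 × Fin n)).coord (k, i)) :=
  rfl

theorem Eop_mul_self (n : ℕ) (α : OpIdx) (i : Fin n) : Eop n α i * Eop n α i = 0 := by
  obtain ⟨_ | _, k⟩ := α <;> refine LinearMap.ext fun x => ?_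
  · simp [Eop_unbarred, ← mul_assoc]
  · simp [Eop_barred, CliffordAlgebra.contractLeft_contractLeft]

theorem Eop_anticomm (n : ℕ) (α β : OpIdx) (i j : Fin n) :
    Eop n α i * Eop n β j + Eop n β j * Eop n α i
      = (if β = bar α ∧ j = i then 1 else 0 : ℝ) • 1 := by
  obtain ⟨_ | _, k⟩ := α <;> obtain ⟨_ | _, l⟩ := β <;> refine LinearMap.ext fun x => ?_ <;>
    simp only [Eop_unbarred, Eop_barred, bar, LinearMap.add_apply, Module.End.mul_apply,
      LinearMap.mulLeft_apply]
  · simp [← mul_assoc, ← add_mul, ExteriorAlgebra.ι_add_mul_swap]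
  · simp [CliffordAlgebra.contractLeft_ι_mul, Pi.single_apply, and_comm, eq_comm,
      apply_ite (fun f : Module.End _ _ => f x)]
  · simp [CliffordAlgebra.contractLeft_ι_mul, Pi.single_apply, and_comm, eq_comm,
      apply_ite (fun f : Module.End _ _ => f x)]
  · rw [CliffordAlgebra.contractLeft_comm]
    simp

theorem Lop_commutator (n : ℕ) (α β γ δ : OpIdx) :
    Lop n α β * Lop n γ δ - Lop n γ δ * Lop n α β
      = (if γ = bar β then 1 else 0 : ℝ) • Lop n α δ - (if δ = bar β then 1 else 0 : ℝ) • Lop n α γ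
        + (if γ = bar α then 1 else 0 : ℝ) • Lop n δ β
        - (if δ = bar α then 1 else 0 : ℝ) • Lop n γ β :=
  commutator_sum_mul_sum_mul_of_anticomm (Eop_anticomm n) α β γ δ

theorem Lop_self (n : ℕ) (α : OpIdx) : Lop n α α = 0 :=
  Finset.sum_eq_zero fun i _ => Eop_mul_self n α i

theorem Lop_add_Lop_bar (n : ℕ) (α : OpIdx) : Lop n α (bar α) + Lop n (bar α) α = n := by
  simpa [Lop] using sum_mul_add_sum_mul_of_anticomm (Eop_anticomm n) α

/-- the operators `eᵢ, fᵢ, hᵢ` built from the `L_{αβ}` satisfy the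
Chevalley–Serre relations of `sl(4,ℝ)`: `[eᵢ,fⱼ] = δᵢⱼ hᵢ`, `[eᵢ,hⱼ] = aᵢⱼ eᵢ`,
`[fᵢ,hⱼ] = −aᵢⱼ fᵢ` for the Cartan matrix `(aᵢⱼ)` of type `A₃`. -/
theorem stmt_13 (n : ℕ) :
    (∀ i j : Fin 3,
        eGen n i * fGen n j - fGen n j * eGen n i = if i = j then hGen n i else 0)
      ∧ (∀ i j : Fin 3,
          eGen n i * hGen n j - hGen n j * eGen n i = cartanA3 i j • eGen n i)
      ∧ (∀ i j : Fin 3,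
          fGen n i * hGen n j - hGen n j * fGen n i = -(cartanA3 i j) • fGen n i) := by
  have Lop_unbarred_barred (k : Fin 3) :
      Lop n (false, k) (true, k) = n - Lop n (true, k) (false, k) :=
    eq_sub_of_add_eq (Lop_add_Lop_bar n (false, k))
  refine ⟨?_, ?_, ?_⟩ <;> intro i j <;> fin_cases i <;> fin_cases j <;>
    simp only [eGen, fGen, hGen, Fin.zero_eta, Fin.mk_one, Fin.isValue, commutator_sub_right,
      Lop_commutator] <;>
    simp only [u, b, bar, Bool.not_true, Bool.not_false, Bool.true_eq_false, Bool.false_eq_true,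
      Prod.mk.injEq, Fin.isValue, Fin.reduceEq, Fin.reduceFinMk, and_true, and_false, and_self,
      ↓reduceIte, Lop_self, Lop_unbarred_barred, cartanA3, Matrix.of_apply, Matrix.cons_val',
      Matrix.cons_val_fin_one, Matrix.cons_val_zero, Matrix.cons_val_one, Matrix.cons_val] <;>
    module
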